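/- arXiv:2507.16555 — 2 statements merged into one kernel-verified Lean document; each statement's English description precedes it below -/
import Mathlib

section
/- Let a and b be real numbers with 0 < a ≤ b, and let X be a real-valued random variable on a probability space satisfying a ≤ X ≤ b almost surely. Then Var(X)/(E[X])² ≤ (b − a)²/(4ab). -/
open MeasureTheory ProbabilityTheory

/-- model-independent bound on the relative fluctuation of a random
variable taking values in `[a, b]` with `0 < a ≤ b`. -/
theorem stmt_11 {Ω : Type*} [MeasureSpace Ω] [IsProbabilityMeasure (ℙ : Measure Ω)]
    (a b : ℝ) (ha : 0 < a) (hab : a ≤ b)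
    (X : Ω → ℝ) (hX : Measurable X)
    (hbound : ∀ᵐ ω, X ω ∈ Set.Icc a b) :
    variance X ℙ / (∫ ω, X ω)^2 ≤ (b - a)^2 / (4 * a * b) := by
  set μ := ∫ ω, X ω with hμ
  have hint : Integrable X ℙ :=
    (memLp_of_bounded hbound hX.aestronglyMeasurable 1).integrable le_rfl
  have hμa : a ≤ μ := by
    calc a = ∫ _ : Ω, a ∂ℙ := by simp
    _ ≤ μ := integral_mono_ae (integrable_const a) hint (hbound.mono fun ω h => h.1)
  have hμpos : 0 < μ := lt_of_lt_of_le ha hμa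
  have hvar : variance X ℙ ≤ (b - μ) * (μ - a) :=
    variance_le_sub_mul_sub hbound hX.aemeasurable
  have hb : 0 < b := lt_of_lt_of_le ha hab
  rw [div_le_div_iff₀ (by positivity) (by positivity)]
  nlinarith [sq_nonneg ((a + b) * μ - 2 * a * b), mul_pos ha hb, sq_nonneg μ,
    mul_le_mul_of_nonneg_left hvar (le_of_lt (by positivity : (0:ℝ) < 4 * a * b))]
end

section
/- Let δ be a nonzero real number and let t, a₁, a₂, ε be real numbers. Define Q = (1/2)[ a₁ K_0 + i a₂ ε K_1 − (2/3) ε² K_2 ], where K_n = ∫_0^t ξ^n e^{−2iδξ} dξ. Then the series Σ_{n=1}^∞ ((−it)^n/n!) (2δ)^{n−1} [ i a₁ − (n/(n+1)) a₂ ε t − (2in/(3(n+2))) ε² t² ] converges and its sum equals 2Q. -/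
open MeasureTheory intervalIntegral Complex

lemma exp_hasSum (x : ℂ) : HasSum (fun n : ℕ => x ^ n / (n.factorial : ℂ)) (Complex.exp x) := by
  have := NormedSpace.exp_series_hasSum_exp' (𝕂 := ℂ) x
  rw [← Complex.exp_eq_exp_ℂ] at this
  simpa [smul_eq_mul, div_eq_inv_mul] using this

lemma intpow (t : ℝ) (n : ℕ) :
    (∫ ξ in (0:ℝ)..t, (ξ : ℂ) ^ n) = (t : ℂ) ^ (n + 1) / ((n + 1 : ℕ) : ℂ) := by
  have h : (∫ ξ in (0:ℝ)..t, ((ξ ^ n : ℝ) : ℂ)) = (((∫ ξ in (0:ℝ)..t, ξ ^ n : ℝ)) : ℂ) :=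
    intervalIntegral.integral_ofReal
  push_cast at h ⊢
  rw [h, integral_pow]
  push_cast
  ring

lemma key (w : ℂ) (t : ℝ) (j : ℕ) :
    HasSum (fun m : ℕ => w ^ m / (m.factorial : ℂ) * ((t : ℂ) ^ (m + j + 1) / ((m + j + 1 : ℕ) : ℂ)))
      (∫ ξ in (0:ℝ)..t, (ξ : ℂ) ^ j * Complex.exp (w * ξ)) := by
  have h := intervalIntegral.hasSum_integral_of_dominated_convergence
    (μ := volume) (a := (0:ℝ)) (b := t)
    (F := fun m ξ => w ^ m / (m.factorial : ℂ) * (ξ : ℂ) ^ (m + j))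
    (f := fun ξ => (ξ : ℂ) ^ j * Complex.exp (w * ξ))
    (bound := fun m _ => ‖w‖ ^ m / m.factorial * (|t| + 1) ^ (m + j))
    (fun m => (Continuous.aestronglyMeasurable (by continuity)))
    ?_ ?_ ?_ ?_
  · convert h using 2 with m
    · rfl
    rw [intervalIntegral.integral_const_mul, intpow]
  · intro m
    filter_upwards with ξ hξ
    have hξ' : |ξ| ≤ |t| + 1 := by
      rw [Set.mem_uIoc] at hξ
      rcases hξ with h | h <;> rw [abs_le] <;> constructor <;>
        nlinarith [abs_nonneg t, le_abs_self t, neg_abs_le t]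
    have e : ‖w ^ m / ((m.factorial : ℕ) : ℂ) * (ξ : ℂ) ^ (m + j)‖
        = ‖w‖ ^ m / (m.factorial : ℝ) * |ξ| ^ (m + j) := by
      rw [norm_mul, norm_div, norm_pow, norm_pow, Complex.norm_natCast, Complex.norm_real,
        Real.norm_eq_abs]
    rw [e]
    have hp : |ξ| ^ (m + j) ≤ (|t| + 1) ^ (m + j) :=
      pow_le_pow_left₀ (abs_nonneg _) hξ' _
    have hnn : (0:ℝ) ≤ ‖w‖ ^ m / (m.factorial : ℝ) := by positivity
    exact mul_le_mul_of_nonneg_left hp hnn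
  · filter_upwards with ξ _
    have hs : Summable fun m : ℕ => (‖w‖ * (|t| + 1)) ^ m / m.factorial * (|t| + 1) ^ j :=
      (Real.summable_pow_div_factorial _).mul_right _
    apply hs.congr
    intro m
    rw [mul_pow, pow_add]
    ring
  · exact _root_.intervalIntegrable_const (μ := volume) (c := ∑' n, ‖w‖ ^ n / n.factorial * (|t| + 1) ^ (n + j))
  · filter_upwards with ξ _
    have h := (exp_hasSum (w * ξ)).mul_left ((ξ:ℂ) ^ j)
    apply h.congr_fun
    intro m
    rw [mul_pow, pow_add]
    ring

/-- resonant series expansion of the echo amplitude `Q₂` in powers of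
the detuning `δ`: the series `Σ_{n=1}^∞ ((−it)^n/n!) (2δ)^{n−1}
[i a₁ − (n/(n+1)) a₂ ε t − (2in/(3(n+2))) ε² t²]` converges to `2Q`. -/
theorem stmt_15 (δ : ℝ) (hδ : δ ≠ 0) (t a₁ a₂ ε : ℝ)
    (K : ℕ → ℂ)
    (hK : ∀ n : ℕ, K n = ∫ ξ in (0:ℝ)..t, (ξ : ℂ)^n * Complex.exp (-2 * Complex.I * δ * ξ))
    (Q : ℂ)
    (hQ : Q = (1/2 : ℂ) * ((a₁ : ℂ) * K 0 + Complex.I * a₂ * ε * K 1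
      - (2/3 : ℂ) * (ε:ℂ)^2 * K 2)) :
    HasSum (fun k : ℕ =>
      ((-Complex.I * t)^(k+1) / ((Nat.factorial (k+1) : ℕ) : ℂ)) * ((2 * δ : ℝ) : ℂ)^k *
        (Complex.I * a₁ - (((k+1 : ℕ) : ℂ) / ((k+2 : ℕ) : ℂ)) * a₂ * ε * t
          - (2 * Complex.I * ((k+1 : ℕ) : ℂ) / (3 * ((k+3 : ℕ) : ℂ))) * (ε:ℂ)^2 * (t:ℂ)^2))
      (2 * Q) := by
  set w : ℂ := -2 * Complex.I * δ with hw
  have h0 := (key w t 0).mul_left (a₁ : ℂ)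
  have h1 := (key w t 1).mul_left (Complex.I * a₂ * ε)
  have h2 := (key w t 2).mul_left ((2/3 : ℂ) * (ε:ℂ)^2)
  have H := (h0.add h1).sub h2
  rw [← hK 0, ← hK 1, ← hK 2] at H
  have hsum : 2 * Q = (a₁:ℂ) * K 0 + Complex.I * a₂ * ε * K 1 - (2/3 : ℂ) * (ε:ℂ)^2 * K 2 := by
    rw [hQ]; ring
  rw [hsum]
  convert H using 1
  · rfl
  funext k
  simp only [hw, Nat.factorial_succ]
  have hk : ((k.factorial : ℕ) : ℂ) ≠ 0 := Nat.cast_ne_zero.2 k.factorial_ne_zero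
  have hc1 : ((k : ℂ) + 1) ≠ 0 := by exact_mod_cast Nat.cast_add_one_ne_zero (R := ℂ) k
  have hc2 : ((k : ℂ) + 2) ≠ 0 := by
    intro h
    exact Nat.cast_add_one_ne_zero (R := ℂ) (k+1) (by push_cast; linear_combination h)
  have hc3 : ((k : ℂ) + 3) ≠ 0 := by
    intro h
    exact Nat.cast_add_one_ne_zero (R := ℂ) (k+2) (by push_cast; linear_combination h)
  have hc2' : ((k : ℂ) + 1 + 1) ≠ 0 := by
    rw [show ((k:ℂ)+1+1) = (k:ℂ)+2 from by ring]; exact hc2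
  have hc3' : ((k : ℂ) + 2 + 1) ≠ 0 := by
    rw [show ((k:ℂ)+2+1) = (k:ℂ)+3 from by ring]; exact hc3
  have hb : (-Complex.I * (t:ℂ))^(k+1) * (2 * (δ:ℂ))^k
      = (-Complex.I * t) * ((-2 * Complex.I * δ) ^ k * (t:ℂ)^k) := by
    rw [pow_succ, mul_comm ((-Complex.I * (t:ℂ))^k) _, mul_assoc, ← mul_pow]
    congr 2
    ring
  push_cast
  rw [div_mul_eq_mul_div, div_mul_eq_mul_div, hb]
  field_simp
  ring_nf
  simp only [Complex.I_sq]
  ring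
end
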